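/- arXiv:0710.0437 — 6 statements merged into one kernel-verified Lean document; each statement's English description precedes it below -/
import Mathlib

section
/- Let K be a finite abelian group generated by n elements, and let a, b₁, …, bₙ ∈ K. Then there exist integers m₁, …, mₙ such that the subgroup generated by a, b₁, …, bₙ equals the subgroup generated by a^{m₁}·b₁, …, a^{mₙ}·bₙ. -/
/-!
Put `H = ⟨a, b₁, …, bₙ⟩` and `N = ⟨a⟩`. A subgroup of an `n`-generated abelian group is again
`n`-generated (quotient by the cyclic subgroup spanned by one generator and induct), so `H` has a
generating `n`-tuple. It remains to show that the images of the `bᵢ` in `K ⧸ N`, which generate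
the image of `H`, lift to a generating tuple of `H`; lifts of `bᵢ` are exactly the `a ^ mᵢ * bᵢ`.

This is Gaschütz's counting argument. For a tuple `x` in `(G ⧸ N)ⁿ` and a subgroup `U`, the lifts
of `x` generating some `V ≤ U` are the lifts with entries in `U`; when `x` lies in the image of `U`
there are `|U ⊓ N| ^ n` of them, independently of `x`. By induction on `U`, the number of lifts of
`x` generating `U` therefore depends only on the subgroup generated by `x`. A generating tuple of
`H` is a lift of its own image, so the images of the `bᵢ` have a generating lift as well.
-/

open Subgroup

section SubgroupGeneration

variable {C : Type*} [CommGroup C]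

theorem exists_fin_succ_closure_eq_of_isCyclic {N : Subgroup C} [IsCyclic N] (H : Subgroup C)
    {n : ℕ} {x : Fin n → C ⧸ N} (hx : closure (Set.range x) = H.map (QuotientGroup.mk' N)) :
    ∃ y : Fin (n + 1) → C, closure (Set.range y) = H := by
  have hxH : ∀ i, ∃ z ∈ H, (z : C ⧸ N) = x i := fun i =>
    mem_map.mp (by rw [← hx]; exact subset_closure ⟨i, rfl⟩)
  choose z hzH hzx using hxH
  obtain ⟨c, hc⟩ := (H ⊓ N).isCyclic_iff_exists_zpowers_eq_top.mp (isCyclic_of_le inf_le_right)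
  refine ⟨Fin.cons c z, ?_⟩
  have hZH : closure (Set.range z) ≤ H := closure_le _ |>.mpr <| Set.range_subset_iff.mpr hzH
  have hZN : closure (Set.range z) ⊔ N = H ⊔ N := by
    rw [← QuotientGroup.ker_mk' N, ← map_eq_map_iff, ← hx, MonoidHom.map_closure, ← Set.range_comp]
    exact congrArg _ (congrArg _ (funext hzx))
  calc closure (Set.range (Fin.cons c z)) = closure (Set.range z) ⊔ H ⊓ N := by
        rw [Fin.range_cons, ← Set.singleton_union, Subgroup.closure_union, ← zpowers_eq_closure,
          hc, sup_comm]
    _ = H := by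
        rw [inf_comm, ← sup_inf_assoc_of_le _ hZH, hZN, inf_eq_right.mpr le_sup_left]

theorem exists_fin_closure_eq_of_closure_eq_top {n : ℕ} {s : Fin n → C}
    (hs : closure (Set.range s) = ⊤) (H : Subgroup C) :
    ∃ x : Fin n → C, closure (Set.range x) = H := by
  induction n generalizing C with
  | zero =>
    refine ⟨s, ?_⟩
    rw [Set.range_eq_empty, Subgroup.closure_empty] at hs ⊢
    exact le_antisymm bot_le (le_top.trans hs.ge)
  | succ n ih =>
    let π := QuotientGroup.mk' (zpowers (s 0))
    have hπs : closure (Set.range (π ∘ s)) = ⊤ := by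
      rw [Set.range_comp, ← MonoidHom.map_closure, hs,
        map_top_of_surjective _ (QuotientGroup.mk'_surjective _)]
    have hπs0 : π (s 0) = 1 := (QuotientGroup.eq_one_iff _).mpr (mem_zpowers _)
    rw [Set.range_comp, Fin.range_fin_succ, Set.image_insert_eq, ← Set.range_comp, hπs0,
      closure_insert_one] at hπs
    obtain ⟨x, hx⟩ := ih hπs (H.map π)
    exact exists_fin_succ_closure_eq_of_isCyclic H hx

end SubgroupGeneration

section Gaschutz

open Finset
open scoped Classical

variable {G : Type*} [Group G] [Fintype G] (N : Subgroup G) [N.Normal] {n : ℕ}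

noncomputable def liftsGenerating (x : Fin n → G ⧸ N) (U : Subgroup G) : Finset (Fin n → G) :=
  {y | (∀ i, (y i : G ⧸ N) = x i) ∧ closure (Set.range y) = U}

variable {N}

theorem map_mk_eq_closure_of_mem_liftsGenerating {x : Fin n → G ⧸ N} {U : Subgroup G}
    {y : Fin n → G} (hy : y ∈ liftsGenerating N x U) :
    U.map (QuotientGroup.mk' N) = closure (Set.range x) := by
  obtain ⟨hyx, rfl⟩ := (mem_filter.mp hy).2
  rw [MonoidHom.map_closure, ← Set.range_comp]
  exact congrArg _ (congrArg _ (funext hyx))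

theorem card_filter_mk_eq_of_mem_map (U : Subgroup G) {q : G ⧸ N}
    (hq : q ∈ U.map (QuotientGroup.mk' N)) :
    #{z | z ∈ U ∧ (z : G ⧸ N) = q} = #{z | z ∈ U ∧ (z : G ⧸ N) = 1} := by
  obtain ⟨u, hu, rfl⟩ := mem_map.mp hq
  refine card_nbij' (· * u⁻¹) (· * u) ?_ ?_ ?_ ?_ <;> intro z <;>
    simp only [SetLike.mem_coe, mem_filter, mem_univ, true_and] <;>
    simp +contextual [U.mul_mem_cancel_right, hu]

theorem sum_card_liftsGenerating_le {x : Fin n → G ⧸ N} (U : Subgroup G)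
    (hx : ∀ i, x i ∈ U.map (QuotientGroup.mk' N)) :
    ∑ V with V ≤ U, #(liftsGenerating N x V) = #{z | z ∈ U ∧ (z : G ⧸ N) = 1} ^ n := by
  calc ∑ V with V ≤ U, #(liftsGenerating N x V)
      = #(Fintype.piFinset fun i => {z | z ∈ U ∧ (z : G ⧸ N) = x i}) := by
        rw [card_eq_sum_card_fiberwise (f := fun y : Fin n → G => Subgroup.closure (Set.range y))
          (t := {V | V ≤ U})]
        · refine sum_congr rfl fun V hV => congrArg card ?_
          ext y
          simp only [liftsGenerating, mem_filter, Fintype.mem_piFinset, mem_univ, true_and,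
            forall_and] at hV ⊢
          exact ⟨fun ⟨hyx, hyV⟩ => ⟨⟨fun i => hV (hyV ▸ subset_closure ⟨i, rfl⟩), hyx⟩, hyV⟩,
            fun ⟨⟨_, hyx⟩, hyV⟩ => ⟨hyx, hyV⟩⟩
        · intro y hy
          simp only [SetLike.mem_coe, mem_filter, mem_univ, true_and, Fintype.mem_piFinset] at hy ⊢
          exact closure_le _ |>.mpr <| Set.range_subset_iff.mpr fun i => (hy i).1
    _ = ∏ i, #{z | z ∈ U ∧ (z : G ⧸ N) = x i} := Fintype.card_piFinset _
    _ = _ := by rw [prod_congr rfl fun i _ => card_filter_mk_eq_of_mem_map U (hx i), prod_const,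
        card_univ, Fintype.card_fin]

theorem card_liftsGenerating_congr {x x' : Fin n → G ⧸ N}
    (h : closure (Set.range x) = closure (Set.range x')) (U : Subgroup G) :
    #(liftsGenerating N x U) = #(liftsGenerating N x' U) := by
  induction U using WellFoundedLT.induction with | _ U ih
  by_cases hU : U.map (QuotientGroup.mk' N) = closure (Set.range x)
  · have hx : ∀ i, x i ∈ U.map (QuotientGroup.mk' N) := fun i => hU ▸ subset_closure ⟨i, rfl⟩
    have hx' : ∀ i, x' i ∈ U.map (QuotientGroup.mk' N) := fun i => hU ▸ h ▸ subset_closure ⟨i, rfl⟩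
    have hsum := (sum_card_liftsGenerating_le U hx).trans (sum_card_liftsGenerating_le U hx').symm
    have hUU : U ∈ ({V | V ≤ U} : Finset (Subgroup G)) := by simp
    rw [← add_sum_erase _ _ hUU, ← add_sum_erase _ _ hUU, sum_congr rfl fun V hV =>
      ih V (lt_of_le_of_ne (mem_filter.mp (mem_erase.mp hV).2).2 (mem_erase.mp hV).1)] at hsum
    exact Nat.add_right_cancel hsum
  · have hempty : ∀ x'' : Fin n → G ⧸ N, closure (Set.range x'') = closure (Set.range x) →
        liftsGenerating N x'' U = ∅ := fun x'' hx'' => eq_empty_of_forall_notMem fun y hy =>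
      hU ((map_mk_eq_closure_of_mem_liftsGenerating hy).trans hx'')
    rw [hempty x rfl, hempty x' h.symm]

theorem exists_lift_closure_eq {H : Subgroup G}
    (hH : ∃ y₀ : Fin n → G, closure (Set.range y₀) = H) {x : Fin n → G ⧸ N}
    (hx : closure (Set.range x) = H.map (QuotientGroup.mk' N)) :
    ∃ y : Fin n → G, (∀ i, (y i : G ⧸ N) = x i) ∧ closure (Set.range y) = H := by
  obtain ⟨y₀, hy₀⟩ := hH
  have hy₀mem : y₀ ∈ liftsGenerating N (fun i => (y₀ i : G ⧸ N)) H := by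
    simp [liftsGenerating, hy₀]
  have hcard := card_liftsGenerating_congr
    ((map_mk_eq_closure_of_mem_liftsGenerating hy₀mem).symm.trans hx.symm) H
  obtain ⟨y, hy⟩ := card_pos.mp (hcard ▸ card_pos.mpr ⟨y₀, hy₀mem⟩)
  exact ⟨y, (mem_filter.mp hy).2⟩

end Gaschutz

theorem stmt_0 (K : Type*) [CommGroup K] [Finite K] (n : ℕ)
    (hgen : ∃ s : Fin n → K, Subgroup.closure (Set.range s) = ⊤)
    (a : K) (b : Fin n → K) :
    ∃ m : Fin n → ℤ,
      Subgroup.closure ({a} ∪ Set.range b) =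
        Subgroup.closure (Set.range fun i => a ^ (m i) * b i) := by
  obtain ⟨s, hs⟩ := hgen
  have := Fintype.ofFinite K
  have hmap : closure (Set.range fun i => (b i : K ⧸ zpowers a)) =
      (closure ({a} ∪ Set.range b)).map (QuotientGroup.mk' (zpowers a)) := by
    rw [MonoidHom.map_closure, Set.image_union, Set.image_singleton, ← Set.range_comp,
      QuotientGroup.mk'_apply, (QuotientGroup.eq_one_iff a).mpr (mem_zpowers a),
      Subgroup.closure_union, closure_singleton_one, bot_sup_eq]
    rfl
  obtain ⟨y, hyb, hyH⟩ :=
    exists_lift_closure_eq (exists_fin_closure_eq_of_closure_eq_top hs _) hmap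
  have hy : ∀ i, ∃ m : ℤ, a ^ m * b i = y i := fun i => by
    obtain ⟨m, hm⟩ := mem_zpowers_iff.mp (QuotientGroup.eq.mp (hyb i).symm)
    exact ⟨m, by rw [hm, mul_comm, mul_inv_cancel_left]⟩
  choose m hm using hy
  exact ⟨m, by simp_rw [hm]; exact hyH.symm⟩
end

section
/- Let K be a finite abelian group that is a vector space over 𝔽_p of dimension d ≤ n, and let a, b₁, …, bₙ ∈ K. Then there exist integers m₁, …, mₙ ∈ {0,1} such that ⟨a, b₁, …, bₙ⟩ = ⟨a^{m₁}·b₁, …, a^{mₙ}·bₙ⟩. -/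
private lemma closure_eq_span {p : ℕ} [NeZero p] {K : Type*} [AddCommGroup K]
    [Module (ZMod p) K] (s : Set K) :
    AddSubgroup.closure s = (Submodule.span (ZMod p) s).toAddSubgroup := by
  apply le_antisymm
  · exact AddSubgroup.closure_le _ |>.2 Submodule.subset_span
  · have : Submodule.span (ZMod p) s ≤ AddSubgroup.toZModSubmodule p (AddSubgroup.closure s) :=
      Submodule.span_le.2 (by simp [AddSubgroup.subset_closure])
    intro x hx
    simpa using this hx

theorem stmt_1 (p : ℕ) [Fact p.Prime] (K : Type*) [AddCommGroup K] [Module (ZMod p) K]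
    [Finite K] (n : ℕ) (hdim : Module.finrank (ZMod p) K ≤ n)
    (a : K) (b : Fin n → K) :
    ∃ m : Fin n → ℕ, (∀ i, m i ≤ 1) ∧
      AddSubgroup.closure ({a} ∪ Set.range b) =
        AddSubgroup.closure (Set.range fun i => m i • a + b i) := by
  have : NeZero p := ⟨(Fact.out : p.Prime).ne_zero⟩
  have hfin : Module.Finite (ZMod p) K := Module.Finite.of_finite
  suffices h : ∃ m : Fin n → ℕ, (∀ i, m i ≤ 1) ∧
      Submodule.span (ZMod p) ({a} ∪ Set.range b) =
        Submodule.span (ZMod p) (Set.range fun i => m i • a + b i) by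
    obtain ⟨m, hm, hspan⟩ := h
    exact ⟨m, hm, by rw [closure_eq_span (p := p), closure_eq_span (p := p), hspan]⟩
  by_cases ha : a ∈ Submodule.span (ZMod p) (Set.range b)
  · refine ⟨0, fun i => Nat.zero_le 1, ?_⟩
    have hr : (Set.range fun i => (0 : Fin n → ℕ) i • a + b i) = Set.range b := by
      ext x
      simp
    rw [hr, Set.singleton_union, Submodule.span_insert_eq_span ha]
  · have hni : ¬ LinearIndependent (ZMod p) b := by
      intro h
      have h1 : n ≤ Module.finrank (ZMod p) K := by
        simpa using h.fintype_card_le_finrank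
      have h2 := h.span_eq_top_of_card_eq_finrank' (by simpa using le_antisymm h1 hdim)
      exact ha (h2 ▸ Submodule.mem_top)
    rw [Fintype.linearIndependent_iff] at hni
    push_neg at hni
    obtain ⟨g, hg0, j, hgj⟩ := hni
    refine ⟨fun i => if i = j then 1 else 0, fun i => by dsimp only; split <;> simp, ?_⟩
    set c : Fin n → K := fun i => (if i = j then 1 else 0 : ℕ) • a + b i with hc
    have hsum : ∑ i, g i • c i = g j • a := by
      have : ∀ i, g i • c i = (if i = j then g j • a else 0) + g i • b i := by
        intro i
        by_cases h : i = j <;> simp [hc, h, smul_add]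
      rw [Finset.sum_congr rfl fun i _ => this i, Finset.sum_add_distrib, hg0,
        Finset.sum_ite_eq' Finset.univ j (fun _ => g j • a)]
      simp
    have hamem : a ∈ Submodule.span (ZMod p) (Set.range c) := by
      have h1 : ∑ i, g i • c i ∈ Submodule.span (ZMod p) (Set.range c) :=
        Submodule.sum_mem _ fun i _ =>
          Submodule.smul_mem _ _ (Submodule.subset_span ⟨i, rfl⟩)
      rw [hsum] at h1
      have := Submodule.smul_mem _ (g j)⁻¹ h1
      rwa [inv_smul_smul₀ hgj] at this
    apply le_antisymm
    · rw [Submodule.span_le]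
      rintro x (rfl | ⟨i, rfl⟩)
      · exact hamem
      · have hci : c i ∈ Submodule.span (ZMod p) (Set.range c) :=
          Submodule.subset_span ⟨i, rfl⟩
        have : b i = c i - (if i = j then 1 else 0 : ℕ) • a := by simp [hc]
        rw [this]
        exact sub_mem hci (nsmul_mem hamem _)
    · rw [Submodule.span_le]
      rintro x ⟨i, rfl⟩
      refine add_mem (nsmul_mem ?_ _) (Submodule.subset_span (Or.inr ⟨i, rfl⟩))
      exact Submodule.subset_span (Set.mem_union_left _ rfl)
end

section
/- Let V be a finite-dimensional vector space over a field, n = dim V, and let T be a set of linear automorphisms of V. Then there exist at most n² elements g₁, …, g_{n²} ∈ T such that every line (one-dimensional subspace) of V invariant under all of g₁, …, g_{n²} is invariant under every element of T. -/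
/-!
Every line invariant under some maps is invariant under their whole linear span in `End V`,
and the span of `T` is already spanned by a linearly independent subfamily of `T`, which has
at most `dim End V = n²` members.
-/

open Module Submodule

theorem Submodule.exists_finset_subset_card_le_finrank_span_image_eq (K : Type*) {M ι : Type*}
    [DivisionRing K] [AddCommGroup M] [Module K M] [Module.Finite K M]
    (v : ι → M) (s : Set ι) :
    ∃ S : Finset ι, ↑S ⊆ s ∧ S.card ≤ finrank K M ∧ span K (v '' S) = span K (v '' s) := by
  classical
  obtain ⟨κ, a, -, hspan, hli⟩ := exists_linearIndependent' K (v ∘ Subtype.val : s → M)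
  have : Fintype κ := @Fintype.ofFinite _ hli.finite
  refine ⟨Finset.univ.image fun k => (a k : ι), ?_, ?_, ?_⟩
  · simp [Set.range_subset_iff]
  · exact Finset.card_image_le.trans hli.fintype_card_le_finrank
  · convert hspan using 2 <;> ext <;> simp

theorem Submodule.span_le_compatibleMaps_self {K V : Type*} [CommRing K] [AddCommGroup V]
    [Module K V] {p : Submodule K V} {s : Set (V →ₗ[K] V)} (hs : ∀ f ∈ s, p.map f ≤ p) :
    span K s ≤ compatibleMaps p p :=
  span_le.2 fun f hf => map_le_iff_le_comap.1 (hs f hf)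

theorem Submodule.map_equiv_eq_of_map_le {K V : Type*} [DivisionRing K] [AddCommGroup V]
    [Module K V] {p : Submodule K V} [FiniteDimensional K p] (g : V ≃ₗ[K] V)
    (h : p.map (g : V →ₗ[K] V) ≤ p) : p.map (g : V →ₗ[K] V) = p :=
  eq_of_le_of_finrank_le h (LinearEquiv.finrank_map_eq g p).ge

theorem stmt_2 (F : Type*) [Field F] (V : Type*) [AddCommGroup V] [Module F V]
    [FiniteDimensional F V] (n : ℕ) (hn : n = Module.finrank F V)
    (T : Set (V ≃ₗ[F] V)) :
    ∃ S : Finset (V ≃ₗ[F] V), ↑S ⊆ T ∧ S.card ≤ n ^ 2 ∧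
      ∀ ℓ : Submodule F V, Module.finrank F ℓ = 1 →
        (∀ g ∈ S, ℓ.map (g : V →ₗ[F] V) = ℓ) →
        ∀ g ∈ T, ℓ.map (g : V →ₗ[F] V) = ℓ := by
  obtain ⟨S, hST, hcard, hspan⟩ := exists_finset_subset_card_le_finrank_span_image_eq F
    (fun g : V ≃ₗ[F] V => (g : V →ₗ[F] V)) T
  refine ⟨S, hST, by rwa [hn, sq, ← finrank_linearMap], fun ℓ _ hS g hg => ?_⟩
  have hT : span F ((fun g : V ≃ₗ[F] V => (g : V →ₗ[F] V)) '' T) ≤ compatibleMaps ℓ ℓ :=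
    hspan ▸ span_le_compatibleMaps_self (by rintro _ ⟨s, hs, rfl⟩; exact (hS s hs).le)
  exact map_equiv_eq_of_map_le g <|
    map_le_iff_le_comap.2 (hT (subset_span ⟨g, hg, rfl⟩))
end

section
/- Let V be a finite-dimensional vector space with dim V = n, and let T be a set of linear automorphisms of V. Then there exist at most 2^{n²} elements g₁, …, g_N ∈ T (with N ≤ 2^{n²}) such that every linear subspace of V invariant under all of g₁, …, g_N is invariant under every element of T. -/
/-!
Since `W` is finite-dimensional and every `g` is injective, `g(W) = W` is equivalent to
`g(W) ⊆ W`, and the maps `f` with `f(W) ⊆ W` form a linear subspace of `End V`. So it suffices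
to pick `S ⊆ T` whose span contains `T`; a basis of `span T` taken from `T` has at most
`dim (End V) = n² ≤ 2^{n²}` elements.
-/

open Module Submodule

theorem exists_finset_subset_card_le_finrank_image_subset_span {K M α : Type*} [DivisionRing K]
    [AddCommGroup M] [Module K M] [FiniteDimensional K M] (f : α → M) (T : Set α) :
    ∃ S : Finset α, ↑S ⊆ T ∧ S.card ≤ finrank K M ∧ f '' T ⊆ span K (f '' S) := by
  obtain ⟨b, hbT, -, hspan, hli⟩ :=
    exists_linearIndepOn_extension (linearIndepOn_empty K f) (Set.empty_subset T)
  have hb : b.Finite := @Set.toFinite _ b hli.finite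
  refine ⟨hb.toFinset, by simpa using hbT, ?_, by simpa using hspan⟩
  have := hb.fintype
  simpa [Set.toFinset_card] using hli.fintype_card_le_finrank

theorem Submodule.map_linearEquiv_eq_of_le {K V : Type*} [DivisionRing K] [AddCommGroup V]
    [Module K V] [FiniteDimensional K V] (g : V ≃ₗ[K] V) {W : Submodule K V}
    (h : W.map (g : V →ₗ[K] V) ≤ W) : W.map (g : V →ₗ[K] V) = W :=
  eq_of_le_of_finrank_eq h (LinearEquiv.finrank_map_eq g W)

theorem stmt_3 (F : Type*) [Field F] (V : Type*) [AddCommGroup V] [Module F V]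
    [FiniteDimensional F V] (n : ℕ) (hn : n = Module.finrank F V)
    (T : Set (V ≃ₗ[F] V)) :
    ∃ S : Finset (V ≃ₗ[F] V), ↑S ⊆ T ∧ S.card ≤ 2 ^ (n ^ 2) ∧
      ∀ W : Submodule F V,
        (∀ g ∈ S, W.map (g : V →ₗ[F] V) = W) →
        ∀ g ∈ T, W.map (g : V →ₗ[F] V) = W := by
  obtain ⟨S, hST, hcard, hspan⟩ := exists_finset_subset_card_le_finrank_image_subset_span
    (K := F) (fun g : V ≃ₗ[F] V ↦ (g : Module.End F V)) T
  have hdim : finrank F (Module.End F V) = n ^ 2 := by rw [finrank_linearMap, hn, sq]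
  refine ⟨S, hST, hdim ▸ hcard.trans (Nat.lt_two_pow_self).le, fun W hW g hg ↦ ?_⟩
  have hcompat : span F ((fun g : V ≃ₗ[F] V ↦ (g : Module.End F V)) '' S) ≤ compatibleMaps W W :=
    span_le.2 <| by
      rintro _ ⟨h, hh, rfl⟩
      exact map_le_iff_le_comap.1 (hW h hh).le
  exact W.map_linearEquiv_eq_of_le g (map_le_iff_le_comap.2 (hcompat (hspan ⟨g, hg, rfl⟩)))
end

section
/- Let V be a finite-dimensional vector space and S ⊆ GL(V) a set of operators. Define w(S) = Σᵢ (dim Uᵢ(S))², where U₁(S), …, U_k(S) are the maximal common eigenspaces of S (subspaces on which every s ∈ S acts as a scalar, maximal with this property). If S ⊆ T and there is a line invariant under S but not under T, then there exists g ∈ T with w(S ∪ {g}) < w(S). -/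
/-- `U` is a common eigenspace of the set `S` of automorphisms: every element of `S`
acts on `U` as a scalar. -/
def IsScalarOn {F V : Type*} [Field F] [AddCommGroup V] [Module F V]
    (S : Set (V ≃ₗ[F] V)) (U : Submodule F V) : Prop :=
  ∀ g ∈ S, ∃ c : F, ∀ v ∈ U, g v = c • v

/-- `w(S)`: the sum of the squares of the dimensions of the maximal common
eigenspaces of `S`. -/
noncomputable def eigWeight {F V : Type*} [Field F] [AddCommGroup V] [Module F V]
    (S : Set (V ≃ₗ[F] V)) : ℕ :=
  ∑ᶠ U ∈ {U : Submodule F V | Maximal (IsScalarOn S) U}, (Module.finrank F U) ^ 2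

/-!
The maximal common eigenspaces of `S` form an independent family: two distinct ones are
separated by some `g ∈ S` acting on them with different scalars, and `g` minus one of the
scalars kills one of them while preserving all others. Adding `g` to `S` refines this family:
every maximal common eigenspace of `S ∪ {g}` lies in one of `S`, and those lying in a fixed `U`
are independent, so their dimensions sum to at most `dim U` and their squares to at most
`(dim U)²`. The `S`-invariant line lies in a maximal common eigenspace `U₀` of `S`, on which `g`
cannot act as a scalar because `g` moves the line; so every piece of `U₀` is strictly smaller
than `U₀`, which makes the inequality strict.
-/

open Module

section Independent

variable {K V : Type*} [DivisionRing K] [AddCommGroup V] [Module K V]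

lemma Submodule.finrank_finset_sup_of_sSupIndep [FiniteDimensional K V]
    {t : Finset (Submodule K V)} (ht : sSupIndep (t : Set (Submodule K V))) :
    finrank K ↥(t.sup id) = ∑ W ∈ t, finrank K W := by
  classical
  induction t using Finset.induction_on with
  | empty => simp
  | insert W t hWt ih =>
    have hdisj : Disjoint W (t.sup id) := by
      rw [Finset.sup_id_eq_sSup]
      exact ht.disjoint_sSup (t.mem_insert_self W) (by simp) hWt
    have hdim := Submodule.finrank_sup_add_finrank_inf_eq W (t.sup id)
    rw [hdisj.eq_bot, finrank_bot, add_zero] at hdim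
    rw [Finset.sup_insert, Finset.sum_insert hWt, id, hdim, ih (ht.mono (by simp))]

lemma Finset.sum_sq_le_mul_sum {ι : Type*} (t : Finset ι) (a : ι → ℕ) {m : ℕ}
    (h : ∀ i ∈ t, a i ≤ m) : ∑ i ∈ t, a i ^ 2 ≤ m * ∑ i ∈ t, a i := by
  rw [Finset.mul_sum]
  exact Finset.sum_le_sum fun i hi => by rw [sq]; exact Nat.mul_le_mul_right _ (h i hi)

lemma Submodule.sum_finrank_sq_le_of_sSupIndep [FiniteDimensional K V]
    {t : Finset (Submodule K V)} (ht : sSupIndep (t : Set (Submodule K V)))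
    {U : Submodule K V} (htU : ∀ W ∈ t, W ≤ U) {m : ℕ} (hm : ∀ W ∈ t, finrank K W ≤ m) :
    ∑ W ∈ t, finrank K W ^ 2 ≤ m * finrank K U :=
  calc ∑ W ∈ t, finrank K W ^ 2 ≤ m * ∑ W ∈ t, finrank K W := t.sum_sq_le_mul_sum _ hm
    _ = m * finrank K ↥(t.sup id) := by rw [finrank_finset_sup_of_sSupIndep ht]
    _ ≤ m * finrank K U := Nat.mul_le_mul_left _ (Submodule.finrank_mono (Finset.sup_le htU))

theorem Submodule.sum_finrank_sq_lt_of_refines [FiniteDimensional K V]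
    {A B : Finset (Submodule K V)} (hB : sSupIndep (B : Set (Submodule K V)))
    (hBA : ∀ W ∈ B, ∃ U ∈ A, W ≤ U) {U₀ : Submodule K V} (hU₀A : U₀ ∈ A) (hU₀B : U₀ ∉ B)
    (hU₀ : 0 < finrank K U₀) :
    ∑ W ∈ B, finrank K W ^ 2 < ∑ U ∈ A, finrank K U ^ 2 := by
  classical
  choose! f hfA hle using hBA
  rw [← Finset.sum_fiberwise_of_maps_to hfA]
  have hfiber : ∀ U, sSupIndep (↑(B.filter (f · = U)) : Set (Submodule K V)) := fun U =>
    hB.mono (Finset.coe_subset.2 (B.filter_subset _))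
  have hfiber_le : ∀ U, ∀ W ∈ B.filter (f · = U), W ≤ U := fun U W hW => by
    obtain ⟨hWB, rfl⟩ := Finset.mem_filter.1 hW
    exact hle W hWB
  refine Finset.sum_lt_sum (fun U _ => ?_) ⟨U₀, hU₀A, ?_⟩
  · calc _ ≤ finrank K U * finrank K U :=
          sum_finrank_sq_le_of_sSupIndep (hfiber U) (hfiber_le U) fun W hW =>
            Submodule.finrank_mono (hfiber_le U W hW)
      _ = finrank K U ^ 2 := (sq _).symm
  · have hlt : ∀ W ∈ B.filter (f · = U₀), finrank K W ≤ finrank K U₀ - 1 := fun W hW => by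
      have hne : W ≠ U₀ := fun h => hU₀B (h ▸ (Finset.mem_filter.1 hW).1)
      exact Nat.le_sub_one_of_lt
        (Submodule.finrank_lt_finrank_of_lt (lt_of_le_of_ne (hfiber_le U₀ W hW) hne))
    calc _ ≤ (finrank K U₀ - 1) * finrank K U₀ :=
          sum_finrank_sq_le_of_sSupIndep (hfiber U₀) (hfiber_le U₀) hlt
      _ < finrank K U₀ ^ 2 := by
          rw [sq]
          exact Nat.mul_lt_mul_of_pos_right (Nat.sub_lt hU₀ one_pos) hU₀

end Independent

section Scalar

variable {F V : Type*} [Field F] [AddCommGroup V] [Module F V]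
  {S T : Set (V ≃ₗ[F] V)} {U U' : Submodule F V}

lemma IsScalarOn.mono (hST : S ⊆ T) (hU : IsScalarOn T U) : IsScalarOn S U :=
  fun g hg => hU g (hST hg)

lemma IsScalarOn.apply_mem (hU : IsScalarOn S U) {g : V ≃ₗ[F] V} (hg : g ∈ S) {v : V}
    (hv : v ∈ U) : g v ∈ U := by
  obtain ⟨c, hc⟩ := hU g hg
  rw [hc v hv]
  exact U.smul_mem c hv

lemma exists_smul_ne_of_maximal_isScalarOn (hU : Maximal (IsScalarOn S) U)
    (hU' : Maximal (IsScalarOn S) U') (hne : U ≠ U') :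
    ∃ g ∈ S, ∃ a b : F, a ≠ b ∧ (∀ v ∈ U, g v = a • v) ∧ ∀ v ∈ U', g v = b • v := by
  by_contra hsep
  have hsup : IsScalarOn S (U ⊔ U') := by
    intro g hg
    obtain ⟨a, ha⟩ := hU.1 g hg
    obtain ⟨b, hb⟩ := hU'.1 g hg
    obtain rfl : a = b := by_contra fun hab => hsep ⟨g, hg, a, b, hab, ha, hb⟩
    refine ⟨a, fun v hv => ?_⟩
    obtain ⟨y, hy, z, hz, rfl⟩ := Submodule.mem_sup.1 hv
    rw [map_add, ha y hy, hb z hz, smul_add]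
  exact hne (le_antisymm (le_sup_left.trans (hU'.2 hsup le_sup_right))
    (le_sup_right.trans (hU.2 hsup le_sup_left)))

lemma disjoint_finset_sup_of_maximal_isScalarOn {t : Finset (Submodule F V)}
    (ht : ∀ W ∈ t, Maximal (IsScalarOn S) W) (hU : Maximal (IsScalarOn S) U) (hUt : U ∉ t) :
    Disjoint U (t.sup id) := by
  classical
  induction t using Finset.induction_on with
  | empty => simp
  | insert U₂ t hU₂t ih =>
    obtain ⟨hUU₂, hUt⟩ := not_or.1 (Finset.mem_insert.not.1 hUt)
    obtain ⟨g, hg, a, b, hab, ha, hb⟩ :=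
      exists_smul_ne_of_maximal_isScalarOn hU (ht U₂ (t.mem_insert_self U₂)) hUU₂
    have ht' : ∀ W ∈ t, Maximal (IsScalarOn S) W := fun W hW => ht W (Finset.mem_insert_of_mem hW)
    rw [Finset.sup_insert, Submodule.disjoint_def]
    intro x hx hx'
    obtain ⟨y, hy, z, hz, rfl⟩ := Submodule.mem_sup.1 hx'
    have hkey : (a - b) • (y + z) = g z - b • z := by
      rw [sub_smul, ← ha _ hx, map_add, hb y hy, smul_add]
      abel
    have hgz : g z ∈ t.sup id := by
      refine (Finset.sup_le fun W hW => ?_ : t.sup id ≤ (t.sup id).comap (g : V →ₗ[F] V)) hz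
      exact fun v hv => Finset.le_sup (f := id) hW ((ht' W hW).1.apply_mem hg hv)
    have hzero := Submodule.disjoint_def.1 (ih ht' hUt) _ (U.smul_mem (a - b) hx)
      (hkey ▸ sub_mem hgz (Submodule.smul_mem _ b hz))
    exact (smul_eq_zero.1 hzero).resolve_left (sub_ne_zero.2 hab)

theorem sSupIndep_maximal_isScalarOn (S : Set (V ≃ₗ[F] V)) :
    sSupIndep {U : Submodule F V | Maximal (IsScalarOn S) U} := by
  classical
  rw [sSupIndep_iff_finite]
  intro t ht U hU
  rw [← Finset.coe_erase, ← Finset.sup_id_eq_sSup]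
  exact disjoint_finset_sup_of_maximal_isScalarOn (fun W hW => ht (Finset.mem_of_mem_erase hW))
    (ht hU) (t.notMem_erase U)

theorem finite_maximal_isScalarOn [FiniteDimensional F V] (S : Set (V ≃ₗ[F] V)) :
    {U : Submodule F V | Maximal (IsScalarOn S) U}.Finite :=
  WellFoundedGT.finite_of_sSupIndep (sSupIndep_maximal_isScalarOn S)

lemma eigWeight_eq_sum [FiniteDimensional F V] (S : Set (V ≃ₗ[F] V)) :
    eigWeight S = ∑ U ∈ (finite_maximal_isScalarOn S).toFinset, finrank F U ^ 2 :=
  finsum_mem_eq_finite_toFinset_sum _ _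

lemma exists_smul_of_map_le_of_finrank_eq_one {ℓ : Submodule F V} (hℓ : finrank F ℓ = 1)
    {g : V →ₗ[F] V} (hg : ℓ.map g ≤ ℓ) : ∃ c : F, ∀ v ∈ ℓ, g v = c • v := by
  obtain ⟨c, hc, -⟩ := LinearMap.existsUnique_eq_smul_id_of_finrank_eq_one hℓ
    (g.restrict fun v hv => hg (Submodule.mem_map_of_mem hv))
  exact ⟨c, fun v hv => by simpa using congrArg Subtype.val (LinearMap.congr_fun hc ⟨v, hv⟩)⟩

lemma LinearEquiv.map_eq_self_of_eq_smul [FiniteDimensional F V] {ℓ : Submodule F V}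
    {g : V ≃ₗ[F] V} {c : F} (hc : ∀ v ∈ ℓ, g v = c • v) : ℓ.map (g : V →ₗ[F] V) = ℓ := by
  refine Submodule.eq_of_le_of_finrank_eq ?_ (g.finrank_map_eq ℓ)
  rintro _ ⟨v, hv, rfl⟩
  simpa [hc v hv] using ℓ.smul_mem c hv

end Scalar

theorem stmt_4_general (F V : Type*) [Field F] [AddCommGroup V] [Module F V]
    [FiniteDimensional F V] (S T : Set (V ≃ₗ[F] V))
    (ℓ : Submodule F V) (hℓ : Module.finrank F ℓ = 1)
    (hSinv : ∀ g ∈ S, ℓ.map (g : V →ₗ[F] V) = ℓ)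
    (hTnot : ∃ g ∈ T, ℓ.map (g : V →ₗ[F] V) ≠ ℓ) :
    ∃ g ∈ T, eigWeight (S ∪ {g}) < eigWeight S := by
  obtain ⟨g, hgT, hgℓ⟩ := hTnot
  refine ⟨g, hgT, ?_⟩
  have hℓS : IsScalarOn S ℓ := fun h hh => exists_smul_of_map_le_of_finrank_eq_one hℓ (hSinv h hh).le
  obtain ⟨U₀, hℓU₀, hU₀⟩ := exists_maximal_ge_of_wellFoundedGT _ ℓ hℓS
  have hU₀g : ¬ IsScalarOn (S ∪ {g}) U₀ := fun h => by
    obtain ⟨c, hc⟩ := h g (Or.inr rfl)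
    exact hgℓ (LinearEquiv.map_eq_self_of_eq_smul fun v hv => hc v (hℓU₀ hv))
  rw [eigWeight_eq_sum, eigWeight_eq_sum]
  refine Submodule.sum_finrank_sq_lt_of_refines ?_ (fun W hW => ?_) (U₀ := U₀) ?_ ?_ ?_
  · rw [Set.Finite.coe_toFinset]
    exact sSupIndep_maximal_isScalarOn _
  · have hWS : IsScalarOn S W := ((Set.Finite.mem_toFinset _).1 hW).1.mono Set.subset_union_left
    obtain ⟨U, hWU, hU⟩ := exists_maximal_ge_of_wellFoundedGT _ W hWS
    exact ⟨U, (Set.Finite.mem_toFinset _).2 hU, hWU⟩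
  · exact (Set.Finite.mem_toFinset _).2 hU₀
  · exact fun h => hU₀g ((Set.Finite.mem_toFinset _).1 h).1
  · exact hℓ ▸ Submodule.finrank_mono hℓU₀ |>.trans_lt' one_pos

theorem stmt_4 (F V : Type*) [Field F] [AddCommGroup V] [Module F V]
    [FiniteDimensional F V] (S T : Set (V ≃ₗ[F] V)) (hST : S ⊆ T)
    (ℓ : Submodule F V) (hℓ : Module.finrank F ℓ = 1)
    (hSinv : ∀ g ∈ S, ℓ.map (g : V →ₗ[F] V) = ℓ)
    (hTnot : ∃ g ∈ T, ℓ.map (g : V →ₗ[F] V) ≠ ℓ) :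
    ∃ g ∈ T, eigWeight (S ∪ {g}) < eigWeight S :=
  stmt_4_general F V S T ℓ hℓ hSinv hTnot
end

section
/- Let V be a finite-dimensional vector space, ρ a linear action on V, and S ⊆ T sets of automorphisms of V. With w(S) defined as the sum of squares of dimensions of the maximal common eigenspaces of S, w is monotone non-increasing: w(T) ≤ w(S). Moreover, w(S) = w(T) if and only if every line invariant under S is invariant under T. -/
open Module

section Aux

variable {F V : Type*} [Field F] [AddCommGroup V] [Module F V]

theorem isScalarOn_mono {S T : Set (V ≃ₗ[F] V)} (hST : S ⊆ T) {U : Submodule F V}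
    (h : IsScalarOn T U) : IsScalarOn S U := fun g hg => h g (hST hg)

/-- distinct maximal common eigenspaces are separated by some element of `S`. -/
theorem exists_separating {S : Set (V ≃ₗ[F] V)} {A B : Submodule F V}
    (hA : Maximal (IsScalarOn S) A) (hB : Maximal (IsScalarOn S) B) (hne : A ≠ B) :
    ∃ g ∈ S, ∃ a b : F, (∀ v ∈ A, g v = a • v) ∧ (∀ v ∈ B, g v = b • v) ∧ a ≠ b := by
  by_contra hcon
  push_neg at hcon
  have hsup : IsScalarOn S (A ⊔ B) := by
    intro g hg
    obtain ⟨a, ha⟩ := hA.1 g hg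
    obtain ⟨b, hb⟩ := hB.1 g hg
    have hab : a = b := hcon g hg a b ha hb
    refine ⟨a, fun v hv => ?_⟩
    obtain ⟨x, hx, y, hy, rfl⟩ := Submodule.mem_sup.mp hv
    rw [map_add, ha x hx, hb y hy, ← hab, smul_add]
  have h1 : A ⊔ B ≤ A := hA.2 hsup le_sup_left
  have h2 : A ⊔ B ≤ B := hB.2 hsup le_sup_right
  exact hne (le_antisymm (le_sup_left.trans h2) (le_sup_right.trans h1))
  
theorem sup_invariant {ℬ : Finset (Submodule F V)} {f : V →ₗ[F] V}
    (h : ∀ B ∈ ℬ, ∀ x ∈ B, f x ∈ B) : ∀ x ∈ ℬ.sup id, f x ∈ ℬ.sup id := by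
  classical
  induction ℬ using Finset.induction with
  | empty => intro x hx; simp_all
  | @insert W ℬ hW ih =>
    intro x hx
    rw [Finset.sup_insert] at hx ⊢
    obtain ⟨a, ha, b, hb, rfl⟩ := Submodule.mem_sup.mp hx
    have h1 : f a ∈ W := h W (Finset.mem_insert_self _ _) a ha
    have h2 : f b ∈ ℬ.sup id := ih (fun B hB => h B (Finset.mem_insert_of_mem hB)) b hb
    rw [map_add]
    exact Submodule.add_mem_sup h1 h2

/-- independence of a maximal common eigenspace from a finite family of others. -/
theorem inf_sup_eq_bot {S : Set (V ≃ₗ[F] V)} (𝒜 : Finset (Submodule F V))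
    (h𝒜 : ∀ B ∈ 𝒜, Maximal (IsScalarOn S) B) {U : Submodule F V}
    (hU : Maximal (IsScalarOn S) U) (hU𝒜 : U ∉ 𝒜) :
    U ⊓ 𝒜.sup id = ⊥ := by
  classical
  induction 𝒜 using Finset.induction with
  | empty => simp
  | @insert W ℬ hW ih =>
    rw [Finset.sup_insert]
    have hUW : U ≠ W := fun h => hU𝒜 (h ▸ Finset.mem_insert_self _ _)
    have hUB : U ∉ ℬ := fun h => hU𝒜 (Finset.mem_insert_of_mem h)
    have hWmax := h𝒜 W (Finset.mem_insert_self _ _)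
    have hℬ : ∀ B ∈ ℬ, Maximal (IsScalarOn S) B := fun B hB => h𝒜 B (Finset.mem_insert_of_mem hB)
    have IH := ih hℬ hUB
    rw [Submodule.eq_bot_iff]
    rintro v ⟨hvU, hvsup⟩
    obtain ⟨g, hg, a, b, ha, hb, hab⟩ := exists_separating hU hWmax hUW
    obtain ⟨w, hw, y, hy, hvwy⟩ := Submodule.mem_sup.mp hvsup
    -- consider f := g - b • id
    set f : V →ₗ[F] V := (g : V →ₗ[F] V) - b • LinearMap.id with hf
    have hfy : f y ∈ ℬ.sup id := by
      refine sup_invariant (f := f) ?_ y hy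
      intro B hB x hx
      obtain ⟨c, hc⟩ := (hℬ B hB).1 g hg
      have : f x = (c - b) • x := by
        simp [hf, hc x hx, sub_smul]
      rw [this]; exact B.smul_mem _ hx
    have hfv : f v = (a - b) • v := by simp [hf, ha v hvU, sub_smul]
    have hfw : f w = 0 := by
      simp [hf, hb w hw, sub_smul]
    have hmem : (a - b) • v ∈ U ⊓ ℬ.sup id := by
      constructor
      · exact U.smul_mem _ hvU
      · have : f v = f w + f y := by rw [← map_add, hvwy]
        rw [← hfv, this, hfw, zero_add]; exact hfy
    rw [IH, Submodule.mem_bot] at hmem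
    rcases smul_eq_zero.mp hmem with h | h
    · exact absurd (sub_eq_zero.mp h) hab
    · exact h

theorem finrank_sup_eq_sum {S : Set (V ≃ₗ[F] V)} [FiniteDimensional F V]
    (𝒜 : Finset (Submodule F V)) (h𝒜 : ∀ B ∈ 𝒜, Maximal (IsScalarOn S) B) :
    finrank F (𝒜.sup id : Submodule F V) = ∑ B ∈ 𝒜, finrank F B := by
  classical
  induction 𝒜 using Finset.induction with
  | empty => simp
  | @insert W ℬ hW ih =>
    have hℬ : ∀ B ∈ ℬ, Maximal (IsScalarOn S) B := fun B hB => h𝒜 B (Finset.mem_insert_of_mem hB)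
    have hint := inf_sup_eq_bot ℬ hℬ (h𝒜 W (Finset.mem_insert_self _ _)) hW
    rw [Finset.sup_insert, Finset.sum_insert hW, ← ih hℬ]
    have := Submodule.finrank_sup_add_finrank_inf_eq W (ℬ.sup id)
    rw [hint] at this
    simpa using this

theorem sum_finrank_le {S : Set (V ≃ₗ[F] V)} [FiniteDimensional F V] {M : Submodule F V}
    (𝒜 : Finset (Submodule F V)) (h𝒜 : ∀ B ∈ 𝒜, Maximal (IsScalarOn S) B)
    (hle : ∀ B ∈ 𝒜, B ≤ M) :
    ∑ B ∈ 𝒜, finrank F B ≤ finrank F M := by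
  rw [← finrank_sup_eq_sum 𝒜 h𝒜]
  exact Submodule.finrank_mono (Finset.sup_le hle)

theorem maximal_finite (S : Set (V ≃ₗ[F] V)) [FiniteDimensional F V] :
    {U : Submodule F V | Maximal (IsScalarOn S) U}.Finite := by
  classical
  by_contra hinf
  obtain ⟨t, hts, hcard⟩ := Set.Infinite.exists_subset_card_eq hinf (finrank F V + 2)
  have hmax : ∀ B ∈ t, Maximal (IsScalarOn S) B := fun B hB => hts hB
  have hsum : ∑ B ∈ t, finrank F B ≤ finrank F V := by
    have := sum_finrank_le (M := ⊤) t hmax (fun B _ => le_top)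
    rwa [finrank_top] at this
  have hbig : t.card - 1 ≤ ∑ B ∈ t, finrank F B := by
    calc t.card - 1 ≤ (t.erase ⊥).card := by
          by_cases h : (⊥ : Submodule F V) ∈ t
          · rw [Finset.card_erase_of_mem h]
          · rw [Finset.erase_eq_of_notMem h]; omega
      _ = ∑ B ∈ t.erase ⊥, 1 := by simp
      _ ≤ ∑ B ∈ t.erase ⊥, finrank F B := by
          refine Finset.sum_le_sum fun B hB => ?_
          have hBbot : B ≠ ⊥ := Finset.ne_of_mem_erase hB
          have : finrank F B ≠ 0 := fun h0 => hBbot (Submodule.finrank_eq_zero.mp h0)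
          omega
      _ ≤ ∑ B ∈ t, finrank F B :=
          Finset.sum_le_sum_of_subset (Finset.erase_subset _ _)
  omega

theorem exists_maximal_ge (S : Set (V ≃ₗ[F] V)) [FiniteDimensional F V] {U : Submodule F V}
    (hU : IsScalarOn S U) : ∃ M, Maximal (IsScalarOn S) M ∧ U ≤ M := by
  have := set_has_maximal_iff_noetherian.mpr (inferInstance : IsNoetherian F V)
  obtain ⟨M, ⟨hMs, hUM⟩, hmax⟩ :=
    this {W : Submodule F V | IsScalarOn S W ∧ U ≤ W} ⟨U, hU, le_rfl⟩
  refine ⟨M, ⟨hMs, fun X hX hMX => ?_⟩, hUM⟩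
  have : ¬ M < X := hmax X ⟨hX, hUM.trans hMX⟩
  exact le_of_eq ((lt_or_eq_of_le hMX).resolve_left this).symm

end Aux
section Aux2

variable {F V : Type*} [Field F] [AddCommGroup V] [Module F V]

theorem maximal_unique {S : Set (V ≃ₗ[F] V)} {U M₁ M₂ : Submodule F V} (hU : U ≠ ⊥)
    (h1 : Maximal (IsScalarOn S) M₁) (h2 : Maximal (IsScalarOn S) M₂)
    (hU1 : U ≤ M₁) (hU2 : U ≤ M₂) : M₁ = M₂ := by
  by_contra hne
  obtain ⟨g, hg, a, b, ha, hb, hab⟩ := exists_separating h1 h2 hne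
  obtain ⟨v, hv, hv0⟩ := Submodule.exists_mem_ne_zero_of_ne_bot hU
  have : a • v = b • v := by rw [← ha v (hU1 hv), ← hb v (hU2 hv)]
  exact hab (smul_left_injective F hv0 this)

variable [FiniteDimensional F V]

open Classical in
/-- a choice of maximal common eigenspace containing `U`. -/
noncomputable def maxExt (S : Set (V ≃ₗ[F] V)) (U : Submodule F V) : Submodule F V :=
  if h : IsScalarOn S U then (exists_maximal_ge S h).choose else ⊥

theorem maxExt_maximal {S : Set (V ≃ₗ[F] V)} {U : Submodule F V} (h : IsScalarOn S U) :
    Maximal (IsScalarOn S) (maxExt S U) := by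
  classical rw [maxExt, dif_pos h]; exact (exists_maximal_ge S h).choose_spec.1

theorem le_maxExt {S : Set (V ≃ₗ[F] V)} {U : Submodule F V} (h : IsScalarOn S U) :
    U ≤ maxExt S U := by
  classical rw [maxExt, dif_pos h]; exact (exists_maximal_ge S h).choose_spec.2

/-- a linear automorphism which is locally scalar on `M` is scalar on `M`. -/
theorem scalar_of_locally_scalar {M : Submodule F V} (g : V ≃ₗ[F] V)
    (h : ∀ v ∈ M, ∃ c : F, g v = c • v) : ∃ c : F, ∀ v ∈ M, g v = c • v := by
  by_cases hbot : M = ⊥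
  · exact ⟨0, fun v hv => by rw [hbot, Submodule.mem_bot] at hv; simp [hv]⟩
  obtain ⟨v₀, hv₀M, hv₀⟩ := Submodule.exists_mem_ne_zero_of_ne_bot hbot
  obtain ⟨c, hc⟩ := h v₀ hv₀M
  refine ⟨c, fun v hv => ?_⟩
  by_cases hv0 : v = 0
  · simp [hv0]
  by_cases hdep : ∃ a : F, v = a • v₀
  · obtain ⟨a, rfl⟩ := hdep
    rw [map_smul, hc, smul_comm]
  · obtain ⟨cv, hcv⟩ := h v hv
    obtain ⟨c', hc'⟩ := h (v + v₀) (M.add_mem hv hv₀M)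
    rw [map_add, hcv, hc, smul_add] at hc'
    have hkey : (cv - c') • v = (c' - c) • v₀ := by
      rw [sub_smul, sub_smul, sub_eq_sub_iff_add_eq_add, hc', add_comm]
    by_cases hcc : c' = c
    · subst hcc
      rw [sub_self, zero_smul, smul_eq_zero] at hkey
      rcases hkey with h' | h'
      · rw [sub_eq_zero] at h'; rw [hcv, h']
      · exact absurd h' hv0
    · have hne : cv - c' ≠ 0 := by
        intro h0
        rw [h0, zero_smul] at hkey
        have := (smul_eq_zero.mp hkey.symm).resolve_right hv₀
        exact hcc (sub_eq_zero.mp this)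
      exact absurd ⟨(cv - c')⁻¹ * (c' - c), by
        rw [mul_smul, ← hkey, inv_smul_smul₀ hne]⟩ hdep

end Aux2
section Aux3

variable {F V : Type*} [Field F] [AddCommGroup V] [Module F V]

theorem line_scalar {v : V} (g : V ≃ₗ[F] V)
    (hg : (Submodule.span F {v}).map (g : V →ₗ[F] V) = Submodule.span F {v}) :
    ∃ c : F, ∀ u ∈ Submodule.span F {v}, g u = c • u := by
  have hgv : g v ∈ Submodule.span F {v} := by
    rw [← hg]
    exact Submodule.mem_map_of_mem (Submodule.mem_span_singleton_self v)
  obtain ⟨c, hc⟩ := Submodule.mem_span_singleton.mp hgv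
  refine ⟨c, fun u hu => ?_⟩
  obtain ⟨a, rfl⟩ := Submodule.mem_span_singleton.mp hu
  rw [map_smul, ← hc, smul_comm]

theorem line_invariant_of_scalar {M : Submodule F V} {v : V} (hv : v ≠ 0) (hvM : v ∈ M)
    {S : Set (V ≃ₗ[F] V)} (hM : IsScalarOn S M) :
    ∀ g ∈ S, (Submodule.span F {v}).map ((g : V ≃ₗ[F] V) : V →ₗ[F] V) = Submodule.span F {v} := by
  intro g hg
  obtain ⟨c, hc⟩ := hM g hg
  have hgv : g v = c • v := hc v hvM
  have hc0 : c ≠ 0 := by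
    intro h0
    rw [h0, zero_smul] at hgv
    exact hv (g.map_eq_zero_iff.mp hgv)
  rw [Submodule.map_span, Set.image_singleton]
  show Submodule.span F {g v} = _
  rw [hgv]
  exact Submodule.span_singleton_smul_eq (isUnit_iff_ne_zero.mpr hc0) v

variable [FiniteDimensional F V]

/-- A subspace of dimension 1 is spanned by a nonzero vector. -/
theorem exists_span_of_finrank_one {ℓ : Submodule F V} (h : finrank F ℓ = 1) :
    ∃ v : V, v ≠ 0 ∧ ℓ = Submodule.span F {v} := by
  have hbot : ℓ ≠ ⊥ := by
    intro h0; rw [h0, finrank_bot F V] at h; simp at h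
  obtain ⟨v, hvℓ, hv⟩ := Submodule.exists_mem_ne_zero_of_ne_bot hbot
  refine ⟨v, hv, ?_⟩
  have hle : Submodule.span F {v} ≤ ℓ := by
    rw [Submodule.span_le, Set.singleton_subset_iff]; exact hvℓ
  have h1 := finrank_span_singleton (K := F) hv
  exact (Submodule.eq_of_le_of_finrank_le hle (by rw [h1, h])).symm

/-- If every `S`-invariant line is `T`-invariant, a maximal common eigenspace of `S`
is scalar-on for `T`. -/
theorem isScalarOn_of_lines {S T : Set (V ≃ₗ[F] V)}
    (hL : ∀ ℓ : Submodule F V, finrank F ℓ = 1 →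
      (∀ g ∈ S, ℓ.map (g : V →ₗ[F] V) = ℓ) → ∀ g ∈ T, ℓ.map (g : V →ₗ[F] V) = ℓ)
    {M : Submodule F V} (hM : IsScalarOn S M) : IsScalarOn T M := by
  intro g hg
  apply scalar_of_locally_scalar
  intro v hv
  by_cases hv0 : v = 0
  · exact ⟨0, by simp [hv0]⟩
  have hT := hL (Submodule.span F {v}) (finrank_span_singleton hv0)
    (line_invariant_of_scalar hv0 hv hM) g hg
  obtain ⟨c, hc⟩ := line_scalar g hT
  exact ⟨c, hc v (Submodule.mem_span_singleton_self v)⟩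

theorem maximal_set_eq {S T : Set (V ≃ₗ[F] V)} (hST : S ⊆ T)
    (hL : ∀ ℓ : Submodule F V, finrank F ℓ = 1 →
      (∀ g ∈ S, ℓ.map (g : V →ₗ[F] V) = ℓ) → ∀ g ∈ T, ℓ.map (g : V →ₗ[F] V) = ℓ) :
    {U : Submodule F V | Maximal (IsScalarOn S) U} = {U | Maximal (IsScalarOn T) U} := by
  ext U
  simp only [Set.mem_setOf_eq]
  constructor
  · intro hU
    exact ⟨isScalarOn_of_lines hL hU.1, fun X hX hUX => hU.2 (isScalarOn_mono hST hX) hUX⟩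
  · intro hU
    have hUS : IsScalarOn S U := isScalarOn_mono hST hU.1
    have hMmax := maxExt_maximal hUS
    have hUM := le_maxExt hUS
    have : maxExt S U ≤ U := hU.2 (isScalarOn_of_lines hL hMmax.1) hUM
    rwa [le_antisymm hUM this]

end Aux3

theorem stmt_11 (F V : Type*) [Field F] [AddCommGroup V] [Module F V]
    [FiniteDimensional F V] (S T : Set (V ≃ₗ[F] V)) (hST : S ⊆ T) :
    eigWeight T ≤ eigWeight S ∧
      (eigWeight S = eigWeight T ↔
        ∀ ℓ : Submodule F V, Module.finrank F ℓ = 1 →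
          (∀ g ∈ S, ℓ.map (g : V →ₗ[F] V) = ℓ) →
          ∀ g ∈ T, ℓ.map (g : V →ₗ[F] V) = ℓ) := by
  classical
  set s := (maximal_finite S).toFinset with hs
  set t := (maximal_finite T).toFinset with ht
  have hws : eigWeight S = ∑ M ∈ s, (finrank F M) ^ 2 :=
    finsum_mem_eq_finite_toFinset_sum _ (maximal_finite S)
  have hwt : eigWeight T = ∑ U ∈ t, (finrank F U) ^ 2 :=
    finsum_mem_eq_finite_toFinset_sum _ (maximal_finite T)
  have hmemt : ∀ U ∈ t, Maximal (IsScalarOn T) U := fun U hU => by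
    rw [ht, Set.Finite.mem_toFinset] at hU; exact hU
  have hmaps : ∀ U ∈ t, maxExt S U ∈ s := by
    intro U hU
    rw [hs, Set.Finite.mem_toFinset]
    exact maxExt_maximal (isScalarOn_mono hST (hmemt U hU).1)
  have hdecomp : ∑ M ∈ s, ∑ U ∈ t.filter (fun U => maxExt S U = M), (finrank F U) ^ 2
      = ∑ U ∈ t, (finrank F U) ^ 2 := Finset.sum_fiberwise_of_maps_to hmaps _
  -- fiber facts
  have hfibmax : ∀ M : Submodule F V, ∀ U ∈ t.filter (fun U => maxExt S U = M),
      Maximal (IsScalarOn T) U := fun M U hU => hmemt U (Finset.mem_filter.mp hU).1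
  have hfible : ∀ M : Submodule F V, ∀ U ∈ t.filter (fun U => maxExt S U = M), U ≤ M := by
    intro M U hU
    obtain ⟨hUt, hUM⟩ := Finset.mem_filter.mp hU
    rw [← hUM]
    exact le_maxExt (isScalarOn_mono hST (hmemt U hUt).1)
  have hfiber_le : ∀ M ∈ s, ∑ U ∈ t.filter (fun U => maxExt S U = M), (finrank F U) ^ 2
      ≤ (finrank F M) ^ 2 := by
    intro M _
    have hsum : ∑ U ∈ t.filter (fun U => maxExt S U = M), finrank F U ≤ finrank F M :=
      sum_finrank_le _ (hfibmax M) (hfible M)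
    calc ∑ U ∈ t.filter (fun U => maxExt S U = M), (finrank F U) ^ 2
        ≤ ∑ U ∈ t.filter (fun U => maxExt S U = M), finrank F U * finrank F M := by
          refine Finset.sum_le_sum fun U hU => ?_
          rw [pow_two]
          exact Nat.mul_le_mul_left _ (Submodule.finrank_mono (hfible M U hU))
      _ = (∑ U ∈ t.filter (fun U => maxExt S U = M), finrank F U) * finrank F M := by
          rw [Finset.sum_mul]
      _ ≤ finrank F M * finrank F M := Nat.mul_le_mul_right _ hsum
      _ = (finrank F M) ^ 2 := (pow_two _).symm
  have hle : eigWeight T ≤ eigWeight S := by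
    rw [hws, hwt, ← hdecomp]
    exact Finset.sum_le_sum hfiber_le
  refine ⟨hle, ?_, ?_⟩
  · -- equality → lines
    intro heq
    by_contra hcon
    push_neg at hcon
    obtain ⟨ℓ, hrank, hSinv, g₀, hg₀T, hg₀ℓ⟩ := hcon
    obtain ⟨v, hv, rfl⟩ := exists_span_of_finrank_one hrank
    have hscal : IsScalarOn S (Submodule.span F {v}) := by
      intro g hg
      exact line_scalar g (hSinv g hg)
    set M := maxExt S (Submodule.span F {v}) with hM
    have hMmax := maxExt_maximal hscal
    have hℓM := le_maxExt hscal
    have hMs : M ∈ s := by rw [hs, Set.Finite.mem_toFinset]; exact hMmax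
    have hMnotT : ¬ IsScalarOn T M := by
      intro hsc
      obtain ⟨c, hc⟩ := hsc g₀ hg₀T
      apply hg₀ℓ
      have hmaple : (Submodule.span F {v}).map ((g₀ : V ≃ₗ[F] V) : V →ₗ[F] V)
          ≤ Submodule.span F {v} := by
        rintro x ⟨u, hu, rfl⟩
        have : (g₀ : V →ₗ[F] V) u = c • u := hc u (hℓM hu)
        rw [this]
        exact Submodule.smul_mem _ _ hu
      exact Submodule.eq_of_le_of_finrank_le hmaple
        (le_of_eq (LinearEquiv.finrank_map_eq g₀ _).symm)
    have hM1 : 1 ≤ finrank F M := by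
      have h' := Submodule.finrank_mono (M := V) hℓM
      rwa [finrank_span_singleton hv] at h'
    -- strict bound on the fiber of M
    have hstrict : ∑ U ∈ t.filter (fun U => maxExt S U = M), (finrank F U) ^ 2
        < (finrank F M) ^ 2 := by
      have hlt : ∀ U ∈ t.filter (fun U => maxExt S U = M), finrank F U ≤ finrank F M - 1 := by
        intro U hU
        have hUM : U ≤ M := hfible M U hU
        have hne : U ≠ M := by
          intro h
          exact hMnotT (h ▸ (hfibmax M U hU).1)
        have := Submodule.finrank_lt_finrank_of_lt (lt_of_le_of_ne hUM hne)
        omega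
      have hsum : ∑ U ∈ t.filter (fun U => maxExt S U = M), finrank F U ≤ finrank F M :=
        sum_finrank_le _ (hfibmax M) (hfible M)
      calc ∑ U ∈ t.filter (fun U => maxExt S U = M), (finrank F U) ^ 2
          ≤ ∑ U ∈ t.filter (fun U => maxExt S U = M), finrank F U * (finrank F M - 1) := by
            refine Finset.sum_le_sum fun U hU => ?_
            rw [pow_two]
            exact Nat.mul_le_mul_left _ (hlt U hU)
        _ = (∑ U ∈ t.filter (fun U => maxExt S U = M), finrank F U) * (finrank F M - 1) := by
            rw [Finset.sum_mul]
        _ ≤ finrank F M * (finrank F M - 1) := Nat.mul_le_mul_right _ hsum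
        _ < (finrank F M) ^ 2 := by
            rw [pow_two]
            exact (Nat.mul_lt_mul_left (show 0 < finrank F M by omega)).mpr (by omega)
    have : eigWeight T < eigWeight S := by
      rw [hws, hwt, ← hdecomp]
      exact Finset.sum_lt_sum (fun M hM => hfiber_le M hM) ⟨M, hMs, hstrict⟩
    omega
  · -- lines → equality
    intro hL
    unfold eigWeight
    rw [maximal_set_eq hST hL]
end
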